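/- arXiv:2411.08265 — 7 statements merged into one kernel-verified Lean document; each statement's English description precedes it below -/
import Mathlib

section
/- Let λ be a partition of n with Young diagram Y_λ, and let r ≥ 1 be an integer. If t is the number of cells of Y_λ whose hook length equals r (equivalently, the number of rim hooks of length r in Y_λ), then t·r ≤ n. -/
/-- The hook length of the cell `c = (i, j)` of a Young diagram `μ`, in 0-indexed
coordinates: `(μ.rowLen i − j) + (μ.colLen j − i) − 1`. -/
def YoungDiagram.hookLen (μ : YoungDiagram) (c : ℕ × ℕ) : ℕ :=
  (μ.rowLen c.1 - c.2) + (μ.colLen c.2 - c.1) - 1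

/-- A finset of naturals of cardinality `m` has sum at least `0 + 1 + ⋯ + (m-1)`. -/
lemma aux_sum_range_card_le_sum (B : Finset ℕ) :
    ∑ i ∈ Finset.range B.card, i ≤ ∑ b ∈ B, b := by
  induction B using Finset.induction_on_max with
  | empty => simp
  | insert a s ha ih =>
    have hanotmem : a ∉ s := fun h => lt_irrefl a (ha a h)
    have hsub : s ⊆ Finset.range a := fun x hx => Finset.mem_range.mpr (ha x hx)
    have hcard : s.card ≤ a := by
      simpa using Finset.card_le_card hsub
    rw [Finset.card_insert_of_notMem hanotmem, Finset.sum_insert hanotmem,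
      Finset.sum_range_succ]
    omega

/-- Abacus core lemma: if `B` is a finset of naturals, the number of `b ∈ B` with
`b ≥ r` and `b - r ∉ B`, multiplied by `r`, plus the minimal possible sum
`0 + ⋯ + (card B - 1)`, is at most the actual sum. -/
lemma aux_abacus (r : ℕ) (hr : 1 ≤ r) :
    ∀ N : ℕ, ∀ B : Finset ℕ, (∑ b ∈ B, b) = N →
      (B.filter (fun b => r ≤ b ∧ b - r ∉ B)).card * r
        + ∑ i ∈ Finset.range B.card, i ≤ N := by
  intro N
  induction N using Nat.strong_induction_on with
  | _ N ih =>
    intro B hsum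
    by_cases hemp : (B.filter (fun b => r ≤ b ∧ b - r ∉ B)) = ∅
    · rw [hemp]
      simpa [hsum] using aux_sum_range_card_le_sum B
    · obtain ⟨b, hb⟩ := Finset.nonempty_iff_ne_empty.mpr hemp
      simp only [Finset.mem_filter] at hb
      obtain ⟨hbB, hrb, hnb⟩ := hb
      set B' : Finset ℕ := insert (b - r) (B.erase b) with hB'
      have hbr_not : b - r ∉ B.erase b := fun h => hnb (Finset.mem_of_mem_erase h)
      have hcard' : B'.card = B.card := by
        rw [hB', Finset.card_insert_of_notMem hbr_not, Finset.card_erase_of_mem hbB]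
        have : 1 ≤ B.card := Finset.card_pos.mpr ⟨b, hbB⟩
        omega
      have hble : b ≤ N := by
        rw [← hsum]
        exact Finset.single_le_sum (fun i _ => Nat.zero_le i) hbB
      have hsumerase : ∑ x ∈ B.erase b, x = N - b := by
        have := Finset.add_sum_erase B id hbB
        simp only [id] at this
        omega
      have hsum' : ∑ x ∈ B', x = N - r := by
        rw [hB', Finset.sum_insert hbr_not, hsumerase]
        omega
      have hlt : N - r < N := by omega
      have key := ih (N - r) hlt B' hsum'
      -- the filtered set of B minus b embeds in the filtered set of B'
      have hsubset : (B.filter (fun x => r ≤ x ∧ x - r ∉ B)).erase b ⊆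
          B'.filter (fun x => r ≤ x ∧ x - r ∉ B') := by
        intro x hx
        rw [Finset.mem_erase, Finset.mem_filter] at hx
        obtain ⟨hxb, hxB, hrx, hxr⟩ := hx
        rw [Finset.mem_filter]
        refine ⟨?_, hrx, ?_⟩
        · exact Finset.mem_insert_of_mem (Finset.mem_erase.mpr ⟨hxb, hxB⟩)
        · intro hmem
          rw [hB', Finset.mem_insert] at hmem
          rcases hmem with h | h
          · exact hxb (by omega)
          · exact hxr (Finset.mem_of_mem_erase h)
      have hcardle : (B.filter (fun x => r ≤ x ∧ x - r ∉ B)).card - 1 ≤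
          (B'.filter (fun x => r ≤ x ∧ x - r ∉ B')).card := by
        calc (B.filter (fun x => r ≤ x ∧ x - r ∉ B)).card - 1
            = ((B.filter (fun x => r ≤ x ∧ x - r ∉ B)).erase b).card := by
              rw [Finset.card_erase_of_mem]
              exact Finset.mem_filter.mpr ⟨hbB, hrb, hnb⟩
          _ ≤ _ := Finset.card_le_card hsubset
      have hfpos : 1 ≤ (B.filter (fun x => r ≤ x ∧ x - r ∉ B)).card :=
        Finset.card_pos.mpr ⟨b, Finset.mem_filter.mpr ⟨hbB, hrb, hnb⟩⟩
      rw [hcard'] at key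
      have : ((B.filter (fun x => r ≤ x ∧ x - r ∉ B)).card - 1) * r
          ≤ (B'.filter (fun x => r ≤ x ∧ x - r ∉ B')).card * r :=
        Nat.mul_le_mul_right r hcardle
      have hNr : r ≤ N := le_trans hrb hble
      calc (B.filter (fun x => r ≤ x ∧ x - r ∉ B)).card * r
            + ∑ i ∈ Finset.range B.card, i
          = ((B.filter (fun x => r ≤ x ∧ x - r ∉ B)).card - 1) * r
            + ∑ i ∈ Finset.range B.card, i + r := by
            have := Nat.succ_pred_eq_of_pos hfpos
            nlinarith [Nat.sub_add_cancel hfpos]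
        _ ≤ (B'.filter (fun x => r ≤ x ∧ x - r ∉ B')).card * r
            + ∑ i ∈ Finset.range B.card, i + r := by omega
        _ ≤ (N - r) + r := by omega
        _ = N := by omega

/-- **Key inequality.** If a Young diagram `μ` with `n` cells has `t` cells of hook
length `r ≥ 1` (equivalently, `t` rim hooks of length `r`), then `t·r ≤ n`. -/
theorem card_hookLen_eq_mul_le (μ : YoungDiagram) (n r t : ℕ) (hn : μ.card = n)
    (hr : 1 ≤ r) (ht : t = (μ.cells.filter (fun c => μ.hookLen c = r)).card) :
    t * r ≤ n := by
  classical
  set m : ℕ := μ.colLen 0 with hm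
  set β : ℕ → ℕ := fun i => μ.rowLen i + (m - 1 - i) with hβ
  -- basic facts
  have hrow_pos : ∀ i, i < m → 1 ≤ μ.rowLen i := by
    intro i hi
    have : (i, 0) ∈ μ := YoungDiagram.mem_iff_lt_colLen.mpr hi
    have := YoungDiagram.mem_iff_lt_rowLen.mp this
    omega
  have hβ_anti : ∀ i k, i < k → k < m → β k < β i := by
    intro i k hik hkm
    have h1 : μ.rowLen k ≤ μ.rowLen i := μ.rowLen_anti i k (le_of_lt hik)
    simp only [hβ]
    omega
  have hβ_inj : Set.InjOn β (Finset.range m : Finset ℕ) := by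
    intro i hi k hk he
    simp only [Finset.coe_range, Set.mem_Iio] at hi hk
    by_contra hne
    rcases lt_or_gt_of_ne hne with h | h
    · exact absurd he (ne_of_gt (hβ_anti i k h hk))
    · exact absurd he.symm (ne_of_gt (hβ_anti k i h hi))
  set Bset : Finset ℕ := (Finset.range m).image β with hBset
  have hcardB : Bset.card = m := by
    rw [hBset, Finset.card_image_of_injOn hβ_inj, Finset.card_range]
  -- card of μ equals sum of row lengths
  have hcells_fst : ∀ c ∈ μ.cells, c.1 ∈ Finset.range m := by
    intro c hc
    have : (c.1, 0) ∈ μ := μ.up_left_mem le_rfl (Nat.zero_le _) (by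
      simpa using hc)
    exact Finset.mem_range.mpr (YoungDiagram.mem_iff_lt_colLen.mp this)
  have hcard_sum : μ.card = ∑ i ∈ Finset.range m, μ.rowLen i := by
    rw [YoungDiagram.card, Finset.card_eq_sum_card_fiberwise hcells_fst]
    refine Finset.sum_congr rfl fun i _ => ?_
    rw [μ.rowLen_eq_card]
    rfl
  have hsumB : ∑ b ∈ Bset, b = n + ∑ i ∈ Finset.range m, i := by
    rw [hBset, Finset.sum_image hβ_inj]
    simp only [hβ]
    rw [Finset.sum_add_distrib, ← hcard_sum, hn]
    congr 1
    exact Finset.sum_range_reflect (fun i => i) m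
  -- each cell of hook length r yields a row i with β i ≥ r and β i - r ∉ Bset
  have hkey : ∀ c ∈ μ.cells, μ.hookLen c = r →
      c.1 < m ∧ r ≤ β c.1 ∧ β c.1 - r = c.2 + (m - μ.colLen c.2) ∧
        (c.2 + (m - μ.colLen c.2)) ∉ Bset := by
    rintro ⟨i, j⟩ hc hcr
    dsimp only at hcr ⊢
    have hcμ : (i, j) ∈ μ := hc
    have hja : j < μ.rowLen i := YoungDiagram.mem_iff_lt_rowLen.mp hcμ
    have hic : i < μ.colLen j := YoungDiagram.mem_iff_lt_colLen.mp hcμ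
    have hcjm : μ.colLen j ≤ m := μ.colLen_anti 0 j (Nat.zero_le j)
    have him : i < m := lt_of_lt_of_le hic hcjm
    have hhook : (μ.rowLen i - j) + (μ.colLen j - i) - 1 = r := hcr
    have hβeq : β i = r + (j + (m - μ.colLen j)) := by
      simp only [hβ]
      omega
    have hnotin : (j + (m - μ.colLen j)) ∉ Bset := by
      rw [hBset]
      simp only [Finset.mem_image, Finset.mem_range, not_exists, not_and]
      intro k hkm
      by_cases hk : k < μ.colLen j
      · have : (k, j) ∈ μ := YoungDiagram.mem_iff_lt_colLen.mpr hk
        have hjk : j < μ.rowLen k := YoungDiagram.mem_iff_lt_rowLen.mp this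
        simp only [hβ]
        omega
      · push_neg at hk
        have : (k, j) ∉ μ := fun h => hk.not_gt (YoungDiagram.mem_iff_lt_colLen.mp h)
        have hjk : μ.rowLen k ≤ j := by
          by_contra hcon
          exact this (YoungDiagram.mem_iff_lt_rowLen.mpr (by omega))
        simp only [hβ]
        omega
    exact ⟨him, by omega, by omega, hnotin⟩
  -- injection from hook-r cells to Bset.filter
  have hinj : ∀ c ∈ μ.cells.filter (fun c => μ.hookLen c = r),
      ∀ c' ∈ μ.cells.filter (fun c => μ.hookLen c = r), β c.1 = β c'.1 → c = c' := by
    rintro ⟨i, j⟩ hc ⟨i', j'⟩ hc' he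
    rw [Finset.mem_filter] at hc hc'
    obtain ⟨hc1, hc2⟩ := hc
    obtain ⟨hc1', hc2'⟩ := hc'
    obtain ⟨him, _, _, _⟩ := hkey _ hc1 hc2
    obtain ⟨him', _, _, _⟩ := hkey _ hc1' hc2'
    have hii : i = i' := hβ_inj (by simpa using him) (by simpa using him') he
    subst hii
    -- now same row: hook length strictly decreasing in j forces j = j'
    have hja : j < μ.rowLen i := YoungDiagram.mem_iff_lt_rowLen.mp hc1
    have hja' : j' < μ.rowLen i := YoungDiagram.mem_iff_lt_rowLen.mp hc1'
    have hic : i < μ.colLen j := YoungDiagram.mem_iff_lt_colLen.mp hc1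
    have hic' : i < μ.colLen j' := YoungDiagram.mem_iff_lt_colLen.mp hc1'
    have h1 : (μ.rowLen i - j) + (μ.colLen j - i) - 1 = r := hc2
    have h2 : (μ.rowLen i - j') + (μ.colLen j' - i) - 1 = r := hc2'
    have hjj : j = j' := by
      rcases lt_trichotomy j j' with h | h | h
      · have : μ.colLen j' ≤ μ.colLen j := μ.colLen_anti j j' (le_of_lt h)
        omega
      · exact h
      · have : μ.colLen j ≤ μ.colLen j' := μ.colLen_anti j' j (le_of_lt h)
        omega
    rw [hjj]
  have hmapsto : ∀ c ∈ μ.cells.filter (fun c => μ.hookLen c = r),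
      β c.1 ∈ Bset.filter (fun b => r ≤ b ∧ b - r ∉ Bset) := by
    intro c hc
    rw [Finset.mem_filter] at hc
    obtain ⟨him, hrβ, hβr, hnot⟩ := hkey c hc.1 hc.2
    refine Finset.mem_filter.mpr ⟨?_, hrβ, ?_⟩
    · exact Finset.mem_image.mpr ⟨c.1, Finset.mem_range.mpr him, rfl⟩
    · rw [hβr]; exact hnot
  have ht_le : t ≤ (Bset.filter (fun b => r ≤ b ∧ b - r ∉ Bset)).card := by
    rw [ht]
    exact Finset.card_le_card_of_injOn (fun c => β c.1) hmapsto
      (fun c hc c' hc' h => hinj c hc c' hc' h)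
  -- conclude with the abacus lemma
  have habacus := aux_abacus r hr (∑ b ∈ Bset, b) Bset rfl
  rw [hcardB, hsumB] at habacus
  have : t * r ≤ (Bset.filter (fun b => r ≤ b ∧ b - r ∉ Bset)).card * r :=
    Nat.mul_le_mul_right r ht_le
  omega
end

section
/- Let λ be a Young diagram and let c = (i,j) be a cell of λ. Define the rim hook of λ at c as the set H_c = {(a,b) ∈ λ : a ≥ i, b ≥ j, and (a+1,b+1) ∉ λ}. Then the cardinality of H_c equals the hook length of c, that is, |H_c| = (λ_i − j) + (λ'_j − i) + 1 (1-indexed), where λ' denotes the conjugate partition. -/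
/-- The rim hook of a Young diagram `μ` at a cell `c = (i, j)`:
the set of cells `(a, b) ∈ μ` with `a ≥ i`, `b ≥ j` and `(a+1, b+1) ∉ μ`. -/
def YoungDiagram.rimHook (μ : YoungDiagram) (c : ℕ × ℕ) : Finset (ℕ × ℕ) :=
  μ.cells.filter (fun x => c.1 ≤ x.1 ∧ c.2 ≤ x.2 ∧ (x.1 + 1, x.2 + 1) ∉ μ.cells)

lemma YoungDiagram.mem_rimHook_iff (μ : YoungDiagram) (c x : ℕ × ℕ) :
    x ∈ μ.rimHook c ↔ x ∈ μ ∧ c.1 ≤ x.1 ∧ c.2 ≤ x.2 ∧ (x.1 + 1, x.2 + 1) ∉ μ := by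
  simp [YoungDiagram.rimHook, YoungDiagram.mem_cells]

private def rowEmb (i : ℕ) : ℕ ↪ ℕ × ℕ :=
  ⟨fun b => (i, b), fun a b h => by simpa using h⟩

private lemma rowEmb_apply (i b : ℕ) : rowEmb i b = (i, b) := rfl

lemma rimHook_aux (μ : YoungDiagram) (j : ℕ) :
    ∀ n i, μ.colLen j = i + n → (i, j) ∈ μ →
      (μ.rimHook (i, j)).card = (μ.rowLen i - j) + (μ.colLen j - i) - 1 := by
  intro n
  induction n with
  | zero =>
    intro i h hm
    exact absurd (YoungDiagram.mem_iff_lt_colLen.mp hm) (by omega)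
  | succ n ih =>
    intro i h hm
    have hj : j < μ.rowLen i := YoungDiagram.mem_iff_lt_rowLen.mp hm
    rcases Nat.eq_zero_or_pos n with hn | hn
    · -- base case : colLen j = i + 1
      have hL : μ.colLen j = i + 1 := by omega
      have hset : μ.rimHook (i, j) = (Finset.Ico j (μ.rowLen i)).map (rowEmb i) := by
        ext x
        rw [μ.mem_rimHook_iff]
        simp only [Finset.mem_map, Finset.mem_Ico, rowEmb_apply]
        constructor
        · rintro ⟨hx, h1, h2, h3⟩
          have hx1 : x.1 = i := by
            by_contra hne
            have : (i + 1, j) ∈ μ := μ.up_left_mem (by omega) h2 hx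
            have := YoungDiagram.mem_iff_lt_colLen.mp this
            omega
          refine ⟨x.2, ⟨h2, ?_⟩, ?_⟩
          · rw [← hx1]; exact YoungDiagram.mem_iff_lt_rowLen.mp (by simpa [← hx1] using hx)
          · rw [← hx1]
        · rintro ⟨b, ⟨hb1, hb2⟩, rfl⟩
          refine ⟨YoungDiagram.mem_iff_lt_rowLen.mpr hb2, le_refl _, hb1, ?_⟩
          intro hmem
          have : (i + 1, j) ∈ μ := μ.up_left_mem (le_refl _) (by omega) hmem
          have := YoungDiagram.mem_iff_lt_colLen.mp this
          omega
      rw [hset, Finset.card_map, Nat.card_Ico, hL]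
      omega
    · -- inductive step : (i+1, j) ∈ μ
      have hm' : (i + 1, j) ∈ μ := YoungDiagram.mem_iff_lt_colLen.mpr (by omega)
      have hk : j < μ.rowLen (i + 1) := YoungDiagram.mem_iff_lt_rowLen.mp hm'
      have hkr : μ.rowLen (i + 1) ≤ μ.rowLen i := μ.rowLen_anti i (i+1) (by omega)
      set k := μ.rowLen (i + 1) with hkdef
      have hset : μ.rimHook (i, j) =
          (Finset.Ico (k - 1) (μ.rowLen i)).map (rowEmb i) ∪ μ.rimHook (i + 1, j) := by
        ext x
        rw [Finset.mem_union, μ.mem_rimHook_iff, μ.mem_rimHook_iff]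
        simp only [Finset.mem_map, Finset.mem_Ico, rowEmb_apply]
        constructor
        · rintro ⟨hx, h1, h2, h3⟩
          rcases Nat.lt_or_ge x.1 (i + 1) with hx1 | hx1
          · have hx1 : x.1 = i := by omega
            left
            refine ⟨x.2, ⟨?_, ?_⟩, ?_⟩
            · -- k - 1 ≤ x.2 : since (x.1+1, x.2+1) ∉ μ and x.1 = i
              by_contra hlt
              exact h3 (YoungDiagram.mem_iff_lt_rowLen.mpr (by rw [hx1]; omega))
            · rw [← hx1]; exact YoungDiagram.mem_iff_lt_rowLen.mp (by simpa [← hx1] using hx)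
            · rw [← hx1]
          · right; exact ⟨hx, hx1, h2, h3⟩
        · rintro (⟨b, ⟨hb1, hb2⟩, rfl⟩ | ⟨hx, h1, h2, h3⟩)
          · refine ⟨YoungDiagram.mem_iff_lt_rowLen.mpr hb2, le_refl _, by omega, ?_⟩
            intro hmem
            have : b + 1 < k := YoungDiagram.mem_iff_lt_rowLen.mp hmem
            omega
          · exact ⟨hx, by omega, h2, h3⟩
      have hdisj : Disjoint ((Finset.Ico (k - 1) (μ.rowLen i)).map (rowEmb i))
          (μ.rimHook (i + 1, j)) := by
        rw [Finset.disjoint_left]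
        rintro x hx hx'
        simp only [Finset.mem_map, rowEmb_apply] at hx
        obtain ⟨b, _, rfl⟩ := hx
        have := (μ.mem_rimHook_iff _ _).mp hx'
        omega
      rw [hset, Finset.card_union_of_disjoint hdisj, Finset.card_map, Nat.card_Ico,
        ih (i + 1) (by omega) hm']
      have : i + 1 < μ.colLen j := by omega
      omega

/-- **The rim hook at a cell has cardinality equal to the hook length of that cell.**
In 0-indexed coordinates, for `(i, j) ∈ μ` the hook length is
`(μ.rowLen i − j) + (μ.colLen j − i) − 1`. -/
theorem card_rimHook_eq_hookLen (μ : YoungDiagram) (i j : ℕ) (hc : (i, j) ∈ μ) :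
    (μ.rimHook (i, j)).card = (μ.rowLen i - j) + (μ.colLen j - i) - 1 := by
  have hi : i < μ.colLen j := YoungDiagram.mem_iff_lt_colLen.mp hc
  exact rimHook_aux μ j (μ.colLen j - i) i (by omega) hc
end

section
/- Let λ be a Young diagram and let c = (i,j) be a cell of λ. Define H_c = {(a,b) ∈ λ : a ≥ i, b ≥ j, and (a+1,b+1) ∉ λ}. Then the set difference λ \ H_c is again a Young diagram; that is, there exists a Young diagram μ whose set of cells equals the cells of λ minus H_c. -/
namespace YoungDiagram

theorem mem_rimHook {μ : YoungDiagram} {c x : ℕ × ℕ} :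
    x ∈ μ.rimHook c ↔ x ∈ μ ∧ c ≤ x ∧ (x.1 + 1, x.2 + 1) ∉ μ := by
  simp only [rimHook, Finset.mem_filter, mem_cells, Prod.le_def, and_assoc]

theorem diag_succ_mem_of_le {μ : YoungDiagram} {p q : ℕ × ℕ} (hqp : q ≤ p)
    (hp : (p.1 + 1, p.2 + 1) ∈ μ) : (q.1 + 1, q.2 + 1) ∈ μ :=
  μ.isLowerSet ⟨Nat.succ_le_succ hqp.1, Nat.succ_le_succ hqp.2⟩ hp

/-- A cell below a cell `p ∉ μ.rimHook c` lies in the region `c ≤ ·` only if `p` does,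
and there `p` has its diagonal successor in `μ`, hence so does the smaller cell. -/
theorem isLowerSet_cells_sdiff_rimHook (μ : YoungDiagram) (c : ℕ × ℕ) :
    IsLowerSet (↑(μ.cells \ μ.rimHook c) : Set (ℕ × ℕ)) := by
  intro p q hqp hp
  simp only [Finset.coe_sdiff, Set.mem_sdiff, Finset.mem_coe, mem_cells, mem_rimHook,
    not_and, not_not] at hp ⊢
  obtain ⟨hpμ, hp_notHook⟩ := hp
  exact ⟨μ.isLowerSet hqp hpμ, fun _ hcq =>
    diag_succ_mem_of_le hqp (hp_notHook hpμ (hcq.trans hqp))⟩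

end YoungDiagram

theorem exists_youngDiagram_cells_eq_sdiff_rimHook_general (μ : YoungDiagram) (i j : ℕ) :
    ∃ ν : YoungDiagram, ν.cells = μ.cells \ μ.rimHook (i, j) :=
  ⟨⟨μ.cells \ μ.rimHook (i, j), μ.isLowerSet_cells_sdiff_rimHook (i, j)⟩, rfl⟩

/-- **Removing a rim hook from a Young diagram leaves a Young diagram.**
For any cell `c = (i, j)` of `μ`, there is a Young diagram `ν` whose set of cells
is the set of cells of `μ` minus the rim hook of `μ` at `c`. -/
theorem exists_youngDiagram_cells_eq_sdiff_rimHook (μ : YoungDiagram) (i j : ℕ)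
    (hc : (i, j) ∈ μ) :
    ∃ ν : YoungDiagram, ν.cells = μ.cells \ μ.rimHook (i, j) :=
  exists_youngDiagram_cells_eq_sdiff_rimHook_general μ i j
end

section
/- Let k ≥ 1, let a_1 > a_2 > ⋯ > a_k ≥ 0 be a strictly decreasing sequence of non-negative integers, let r ≥ a_1 + 1, and set b_j = r − 1 − a_{k+1−j} for 1 ≤ j ≤ k. Let λ be the partition with Frobenius coordinates (a_1,…,a_k | b_1,…,b_k), i.e., the partition of n = kr with Durfee square size k satisfying λ_i = a_i + i and λ'_j = b_j + j for all 1 ≤ i,j ≤ k. Then Y_λ has exactly k cells of hook length r (equivalently, exactly k rim hooks of length r), namely the cells (p, k+1−p) for p = 1,…,k. -/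
/-!
Inside the `k × k` Durfee square the hook of `(i, j)` has length
`a i + b j + 1 = r + a i - a (k-1-j)`, which is `r` exactly when `a i = a (k-1-j)`, i.e. on the
antidiagonal `i + j = k - 1`, as `a` is injective. Columns to the right of the square have length at
most `k`, so a cell `(i, j)` there has hook length at most `a i < r`; symmetrically a cell below the
square has hook length at most `b j < r`.
-/

theorem StrictAntiOn.add_self_le_add_self {k : ℕ} {a : ℕ → ℕ} (ha : StrictAntiOn a (Set.Iio k))
    {i j : ℕ} (hij : i ≤ j) (hj : j < k) : a j + j ≤ a i + i := by
  induction j, hij using Nat.le_induction with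
  | base => rfl
  | succ j hij ih =>
    have := ha (Set.mem_Iio.2 (by omega)) (Set.mem_Iio.2 hj) (Nat.lt_add_one j)
    specialize ih (by omega)
    omega

namespace YoungDiagram

theorem hookLen_add_add_add_one {μ : YoungDiagram} {i j : ℕ} (h : (i, j) ∈ μ) :
    μ.hookLen (i, j) + i + j + 1 = μ.rowLen i + μ.colLen j := by
  have hrow := mem_iff_lt_rowLen.1 h
  have hcol := mem_iff_lt_colLen.1 h
  simp only [hookLen]
  omega

theorem rowLen_le_of_notMem {μ : YoungDiagram} {i : ℕ} (h : (i, i) ∉ μ) : μ.rowLen i ≤ i :=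
  not_lt.1 fun hi => h (mem_iff_lt_rowLen.2 hi)

theorem colLen_le_of_notMem {μ : YoungDiagram} {j : ℕ} (h : (j, j) ∉ μ) : μ.colLen j ≤ j :=
  not_lt.1 fun hj => h (mem_iff_lt_colLen.2 hj)

theorem hookLen_add_lt_rowLen {μ : YoungDiagram} {i j : ℕ} (h : (i, j) ∈ μ) (hj : (j, j) ∉ μ) :
    μ.hookLen (i, j) + i < μ.rowLen i := by
  have := hookLen_add_add_add_one h
  have := colLen_le_of_notMem hj
  omega

theorem hookLen_add_lt_colLen {μ : YoungDiagram} {i j : ℕ} (h : (i, j) ∈ μ) (hi : (i, i) ∉ μ) :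
    μ.hookLen (i, j) + j < μ.colLen j := by
  have := hookLen_add_add_add_one h
  have := rowLen_le_of_notMem hi
  omega

end YoungDiagram

namespace Frobenius

open YoungDiagram

variable {k r : ℕ} {a b : ℕ → ℕ} {μ : YoungDiagram}

theorem hookLen_eq_iff_of_lt_of_lt (ha : StrictAntiOn a (Set.Iio k)) (hr : a 0 + 1 ≤ r)
    (hb : ∀ j < k, b j = r - 1 - a (k - 1 - j))
    (hrow : ∀ i < k, μ.rowLen i = a i + i + 1) (hcol : ∀ j < k, μ.colLen j = b j + j + 1)
    {i j : ℕ} (h : (i, j) ∈ μ) (hi : i < k) (hj : j < k) :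
    μ.hookLen (i, j) = r ↔ i + j = k - 1 := by
  have hhook := hookLen_add_add_add_one h
  rw [hrow i hi, hcol j hj, hb j hj] at hhook
  have hj' : k - 1 - j < k := by omega
  have := ha.add_self_le_add_self (Nat.zero_le _) hj'
  rw [show i + j = k - 1 ↔ i = k - 1 - j by omega, ← ha.injOn.eq_iff hi hj']
  omega

theorem lt_and_lt_of_hookLen_eq (ha : StrictAntiOn a (Set.Iio k)) (hr : a 0 + 1 ≤ r)
    (hb : ∀ j < k, b j = r - 1 - a (k - 1 - j)) (hd : (k, k) ∉ μ)
    (hrow : ∀ i < k, μ.rowLen i = a i + i + 1) (hcol : ∀ j < k, μ.colLen j = b j + j + 1)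
    {i j : ℕ} (h : (i, j) ∈ μ) (hhook : μ.hookLen (i, j) = r) : i < k ∧ j < k := by
  have not_mem_diag {m : ℕ} (hm : k ≤ m) : (m, m) ∉ μ := fun hm' => hd (μ.up_left_mem hm hm hm')
  by_contra! hout
  by_cases hi : i < k
  · have := hookLen_add_lt_rowLen h (not_mem_diag (hout hi))
    have := ha.add_self_le_add_self (Nat.zero_le i) hi
    rw [hrow i hi] at *
    omega
  · by_cases hj : j < k
    · have := hookLen_add_lt_colLen h (not_mem_diag (not_lt.1 hi))
      rw [hcol j hj, hb j hj] at *
      omega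
    · exact hd (μ.up_left_mem (not_lt.1 hi) (not_lt.1 hj) h)

theorem antidiagonal_mem (ha : StrictAntiOn a (Set.Iio k))
    (hrow : ∀ i < k, μ.rowLen i = a i + i + 1) {p : ℕ} (hp : p < k) : (p, k - 1 - p) ∈ μ := by
  have := ha.add_self_le_add_self (Nat.le_sub_one_of_lt hp) (Nat.sub_one_lt_of_lt hp)
  rw [mem_iff_lt_rowLen, hrow p hp]
  omega

end Frobenius

open Frobenius in
theorem hookLen_cells_of_frobenius_symmetric_general (k r : ℕ) (a b : ℕ → ℕ)
    (ha : ∀ i j : ℕ, i < j → j < k → a j < a i) (hr : a 0 + 1 ≤ r)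
    (hb : ∀ j : ℕ, j < k → b j = r - 1 - a (k - 1 - j))
    (μ : YoungDiagram)
    (hd₂ : (k, k) ∉ μ)
    (hrow : ∀ i : ℕ, i < k → μ.rowLen i = a i + i + 1)
    (hcol : ∀ j : ℕ, j < k → μ.colLen j = b j + j + 1) :
    (μ.cells.filter (fun c => μ.hookLen c = r)).card = k ∧
      μ.cells.filter (fun c => μ.hookLen c = r) =
        (Finset.range k).image (fun p => (p, k - 1 - p)) := by
  have ha' : StrictAntiOn a (Set.Iio k) := fun i _ j hj hij => ha i j hij hj
  have hcells : μ.cells.filter (fun c => μ.hookLen c = r) =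
      (Finset.range k).image (fun p => (p, k - 1 - p)) := by
    ext ⟨i, j⟩
    simp only [Finset.mem_filter, YoungDiagram.mem_cells, Finset.mem_image, Finset.mem_range,
      Prod.mk.injEq]
    constructor
    · rintro ⟨hmem, hhook⟩
      obtain ⟨hi, hj⟩ := lt_and_lt_of_hookLen_eq ha' hr hb hd₂ hrow hcol hmem hhook
      have := (hookLen_eq_iff_of_lt_of_lt ha' hr hb hrow hcol hmem hi hj).1 hhook
      exact ⟨i, hi, rfl, by omega⟩
    · rintro ⟨p, hp, rfl, rfl⟩
      have hmem := antidiagonal_mem ha' hrow hp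
      exact ⟨hmem, (hookLen_eq_iff_of_lt_of_lt ha' hr hb hrow hcol hmem hp (by omega)).2 (by omega)⟩
  refine ⟨?_, hcells⟩
  rw [hcells, Finset.card_image_of_injective _ fun x y h => congrArg Prod.fst h, Finset.card_range]

/-- **The symmetric Frobenius-coordinate partitions have exactly `k` hooks of length `r`.**
Let `k ≥ 1`, let `a 0 > a 1 > ⋯ > a (k−1) ≥ 0` (0-indexed) be strictly decreasing
non-negative integers, let `r ≥ a 0 + 1`, and set `b j = r − 1 − a (k−1−j)`.  Let `μ` be
the partition with Frobenius coordinates `(a | b)`: it has Durfee square size `k`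
(0-indexed: `(k−1, k−1) ∈ μ`, `(k, k) ∉ μ`), `μ.rowLen i = a i + i + 1` and
`μ.colLen j = b j + j + 1` for `i, j < k`, and `μ.card = k * r`.  Then `μ` has exactly
`k` cells of hook length `r`, namely the cells `(p, k−1−p)` for `0 ≤ p < k` (0-indexed,
i.e. the 1-indexed cells `(p, k+1−p)` for `1 ≤ p ≤ k`). -/
theorem hookLen_cells_of_frobenius_symmetric (k r : ℕ) (hk : 1 ≤ k) (a b : ℕ → ℕ)
    (ha : ∀ i j : ℕ, i < j → j < k → a j < a i) (hr : a 0 + 1 ≤ r)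
    (hb : ∀ j : ℕ, j < k → b j = r - 1 - a (k - 1 - j))
    (μ : YoungDiagram)
    (hd₁ : (k - 1, k - 1) ∈ μ) (hd₂ : (k, k) ∉ μ)
    (hrow : ∀ i : ℕ, i < k → μ.rowLen i = a i + i + 1)
    (hcol : ∀ j : ℕ, j < k → μ.colLen j = b j + j + 1)
    (hcard : μ.card = k * r) :
    (μ.cells.filter (fun c => μ.hookLen c = r)).card = k ∧
      μ.cells.filter (fun c => μ.hookLen c = r) =
        (Finset.range k).image (fun p => (p, k - 1 - p)) :=
  hookLen_cells_of_frobenius_symmetric_general k r a b ha hr hb μ hd₂ hrow hcol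
end

section
/- Let k ≥ 1, let a_1 > a_2 > ⋯ > a_k ≥ 0 be non-negative integers, let r ≥ a_1 + 1, set b_j = r − 1 − a_{k+1−j}, and let λ be the partition with Frobenius coordinates (a_1,…,a_k | b_1,…,b_k). Fix p with 1 ≤ p ≤ k and let H = {(x,y) ∈ Y_λ : x ≥ p, y ≥ k+1−p, (x+1,y+1) ∉ Y_λ} be the rim hook of λ at the cell (p, k+1−p). Then Y_λ \ H is the Young diagram of the partition μ with Frobenius coordinates (a_1,…,a_{p−1},a_{p+1},…,a_k | b_1,…,b_{k−p},b_{k−p+2},…,b_k), i.e., the coordinates obtained by omitting a_p from the arm sequence and b_{k+1−p} = r−1−a_p from the leg sequence. -/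
namespace YoungDiagram

def sdiffRimHook (μ : YoungDiagram) (c : ℕ × ℕ) : YoungDiagram where
  cells := μ.cells.filter fun x => x.1 < c.1 ∨ x.2 < c.2 ∨ (x.1 + 1, x.2 + 1) ∈ μ
  isLowerSet := by
    rintro ⟨i₂, j₂⟩ ⟨i₁, j₁⟩ ⟨hi, hj⟩ h
    simp only [Finset.coe_filter, Set.mem_ofPred_eq, mem_cells] at h ⊢
    refine ⟨μ.up_left_mem hi hj h.1, ?_⟩
    rcases h.2 with h' | h' | h'
    · exact Or.inl (by omega)
    · exact Or.inr (Or.inl (by omega))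
    · by_cases hi' : i₁ < c.1
      · exact Or.inl hi'
      by_cases hj' : j₁ < c.2
      · exact Or.inr (Or.inl hj')
      exact Or.inr (Or.inr (μ.up_left_mem (by omega) (by omega) h'))

variable {μ : YoungDiagram} {c : ℕ × ℕ}

theorem mem_sdiffRimHook {x : ℕ × ℕ} :
    x ∈ μ.sdiffRimHook c ↔ x ∈ μ ∧ (x.1 < c.1 ∨ x.2 < c.2 ∨ (x.1 + 1, x.2 + 1) ∈ μ) := by
  change x ∈ (μ.sdiffRimHook c).cells ↔ _
  simp [sdiffRimHook]

theorem cells_sdiffRimHook (μ : YoungDiagram) (c : ℕ × ℕ) :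
    (μ.sdiffRimHook c).cells = μ.cells \ μ.rimHook c := by
  ext x
  simp only [mem_cells, mem_sdiffRimHook, rimHook, Finset.mem_sdiff, Finset.mem_filter]
  by_cases hx : (x.1 + 1, x.2 + 1) ∈ μ <;> by_cases hm : x ∈ μ <;> simp [hx, hm]; omega

theorem transpose_sdiffRimHook (μ : YoungDiagram) (c : ℕ × ℕ) :
    (μ.sdiffRimHook c).transpose = μ.transpose.sdiffRimHook c.swap := by
  ext x
  simp only [mem_cells, mem_transpose, mem_sdiffRimHook, Prod.fst_swap, Prod.snd_swap]
  tauto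

theorem rowLen_sdiffRimHook_of_lt {i : ℕ} (hi : i < c.1) :
    (μ.sdiffRimHook c).rowLen i = μ.rowLen i :=
  eq_of_forall_lt_iff fun m => by
    rw [← mem_iff_lt_rowLen, ← mem_iff_lt_rowLen, mem_sdiffRimHook]
    exact and_iff_left (Or.inl hi)

theorem rowLen_sdiffRimHook_of_le {i : ℕ} (hi : c.1 ≤ i) (hc : c.2 < μ.rowLen (i + 1)) :
    (μ.sdiffRimHook c).rowLen i = μ.rowLen (i + 1) - 1 :=
  eq_of_forall_lt_iff fun m => by
    have hanti := μ.rowLen_anti i (i + 1) (Nat.le_succ i)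
    rw [← mem_iff_lt_rowLen, mem_sdiffRimHook, mem_iff_lt_rowLen, mem_iff_lt_rowLen]
    dsimp only
    omega

theorem colLen_sdiffRimHook_of_lt {j : ℕ} (hj : j < c.2) :
    (μ.sdiffRimHook c).colLen j = μ.colLen j := by
  rw [← rowLen_transpose, transpose_sdiffRimHook, rowLen_sdiffRimHook_of_lt hj, rowLen_transpose]

theorem colLen_sdiffRimHook_of_le {j : ℕ} (hj : c.2 ≤ j) (hc : c.1 < μ.colLen (j + 1)) :
    (μ.sdiffRimHook c).colLen j = μ.colLen (j + 1) - 1 := by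
  rw [← rowLen_transpose, transpose_sdiffRimHook, rowLen_sdiffRimHook_of_le hj
    (by rwa [rowLen_transpose]), rowLen_transpose]

end YoungDiagram

theorem StrictAntiOn.add_sub_le_of_lt {k : ℕ} {a : ℕ → ℕ} (ha : StrictAntiOn a (Set.Iio k))
    {i j : ℕ} (hij : i ≤ j) (hj : j < k) : a j + (j - i) ≤ a i := by
  induction j, hij using Nat.le_induction with
  | base => simp
  | succ j hij ih =>
    have hstep : a (j + 1) < a j := ha (by simp; omega) hj (Nat.lt_succ_self j)
    have := ih (by omega)
    omega

open YoungDiagram in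
theorem sdiff_rimHook_of_frobenius_symmetric_general (k r : ℕ) (a b : ℕ → ℕ)
    (ha : ∀ i j : ℕ, i < j → j < k → a j < a i) (hr : a 0 + 1 ≤ r)
    (hb : ∀ j : ℕ, j < k → b j = r - 1 - a (k - 1 - j))
    (μ : YoungDiagram)
    (hd₁ : (k - 1, k - 1) ∈ μ) (hd₂ : (k, k) ∉ μ)
    (hrow : ∀ i : ℕ, i < k → μ.rowLen i = a i + i + 1)
    (hcol : ∀ j : ℕ, j < k → μ.colLen j = b j + j + 1)
    (p : ℕ) (hp : p < k) :
    ∃ ν : YoungDiagram,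
      ν.cells = μ.cells \ μ.rimHook (p, k - 1 - p) ∧
      (2 ≤ k → (k - 2, k - 2) ∈ ν) ∧ (k - 1, k - 1) ∉ ν ∧
      (∀ i : ℕ, i < k - 1 → ν.rowLen i = (if i < p then a i else a (i + 1)) + i + 1) ∧
      (∀ j : ℕ, j < k - 1 →
        ν.colLen j = (if j < k - 1 - p then b j else b (j + 1)) + j + 1) := by
  have ha' : StrictAntiOn a (Set.Iio k) := fun i _ j hj hij => ha i j hij hj
  refine ⟨μ.sdiffRimHook (p, k - 1 - p), cells_sdiffRimHook μ _, fun hk => ?_, ?_,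
    fun i hi => ?_, fun j hj => ?_⟩
  · refine mem_sdiffRimHook.2 ⟨μ.up_left_mem (by omega) (by omega) hd₁, Or.inr (Or.inr ?_)⟩
    rwa [show k - 2 + 1 = k - 1 by omega]
  · rw [mem_sdiffRimHook, show k - 1 + 1 = k by omega]
    rintro ⟨-, h | h | h⟩
    · omega
    · omega
    · exact hd₂ h
  · split_ifs with hip
    · rw [rowLen_sdiffRimHook_of_lt hip, hrow i (by omega)]
    · have hlow := ha'.add_sub_le_of_lt (show i + 1 ≤ k - 1 by omega) (by omega)
      rw [rowLen_sdiffRimHook_of_le (by simpa using hip) (by rw [hrow (i + 1) (by omega)]; omega),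
        hrow (i + 1) (by omega)]
      omega
  · split_ifs with hjp
    · rw [colLen_sdiffRimHook_of_lt hjp, hcol j (by omega)]
    · have hlow := ha'.add_sub_le_of_lt (Nat.zero_le (k - 2 - j)) (by omega)
      have hbj : b (j + 1) = r - 1 - a (k - 2 - j) := by
        rw [hb (j + 1) (by omega), show k - 1 - (j + 1) = k - 2 - j by omega]
      rw [colLen_sdiffRimHook_of_le (by simpa using hjp)
        (by rw [hcol (j + 1) (by omega), hbj]; omega), hcol (j + 1) (by omega), hbj]
      omega

/-- **Removing a hook of length `r` from a symmetric Frobenius-coordinate partition.**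
Let `k ≥ 1`, let `a 0 > a 1 > ⋯ > a (k−1) ≥ 0` (0-indexed) be strictly decreasing
non-negative integers, let `r ≥ a 0 + 1`, set `b j = r − 1 − a (k−1−j)`, and let `μ` be
the partition with Frobenius coordinates `(a | b)`, i.e. `μ` has Durfee square size `k`
(0-indexed: `(k−1, k−1) ∈ μ`, `(k, k) ∉ μ`) with `μ.rowLen i = a i + i + 1`,
`μ.colLen j = b j + j + 1` for `i, j < k`.  Fix `p < k` (0-indexed) and let `H` be the
rim hook of `μ` at the cell `(p, k−1−p)`.  Then `μ \ H` is the Young diagram `ν` of the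
partition with Frobenius coordinates obtained from `(a | b)` by omitting `a p` from the
arm sequence and `b (k−1−p) = r − 1 − a p` from the leg sequence: `ν` has Durfee square
size `k − 1` with `ν.rowLen i = (if i < p then a i else a (i+1)) + i + 1` and
`ν.colLen j = (if j < k−1−p then b j else b (j+1)) + j + 1` for `i, j < k − 1`. -/
theorem sdiff_rimHook_of_frobenius_symmetric (k r : ℕ) (hk : 1 ≤ k) (a b : ℕ → ℕ)
    (ha : ∀ i j : ℕ, i < j → j < k → a j < a i) (hr : a 0 + 1 ≤ r)
    (hb : ∀ j : ℕ, j < k → b j = r - 1 - a (k - 1 - j))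
    (μ : YoungDiagram)
    (hd₁ : (k - 1, k - 1) ∈ μ) (hd₂ : (k, k) ∉ μ)
    (hrow : ∀ i : ℕ, i < k → μ.rowLen i = a i + i + 1)
    (hcol : ∀ j : ℕ, j < k → μ.colLen j = b j + j + 1)
    (p : ℕ) (hp : p < k) :
    ∃ ν : YoungDiagram,
      ν.cells = μ.cells \ μ.rimHook (p, k - 1 - p) ∧
      (2 ≤ k → (k - 2, k - 2) ∈ ν) ∧ (k - 1, k - 1) ∉ ν ∧
      (∀ i : ℕ, i < k - 1 → ν.rowLen i = (if i < p then a i else a (i + 1)) + i + 1) ∧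
      (∀ j : ℕ, j < k - 1 →
        ν.colLen j = (if j < k - 1 - p then b j else b (j + 1)) + j + 1) :=
  sdiff_rimHook_of_frobenius_symmetric_general k r a b ha hr hb μ hd₁ hd₂ hrow hcol p hp
end

section
/- Fix an integer q ≥ 2. For each n ≥ 1 let s_n = Σ_{m=0}^{n−1} exp(2πi·q^m/(q^n − 1)) ∈ ℂ. Then the series Σ_{j=1}^{∞} (1 − exp(2πi/q^j)) converges, and s_n − n converges as n → ∞ to −Σ_{j=1}^{∞} (1 − exp(2πi/q^j)). In particular s_n = n + O(1) as n → ∞. -/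
open Filter

lemma green_aux_norm_exp_sub_one (x : ℝ) :
    ‖Complex.exp ((x : ℂ) * Complex.I) - 1‖ ≤ |x| := by
  have h1 : ‖Complex.exp ((x : ℂ) * Complex.I) - 1‖
      = Real.sqrt ((Real.cos x - 1) ^ 2 + (Real.sin x) ^ 2) := by
    rw [Complex.norm_def, Complex.normSq_apply]
    simp only [Complex.sub_re, Complex.sub_im, Complex.exp_ofReal_mul_I_re,
      Complex.exp_ofReal_mul_I_im, Complex.one_re, Complex.one_im, sub_zero]
    ring_nf
  have h2 : (Real.cos x - 1) ^ 2 + (Real.sin x) ^ 2 = (2 * Real.sin (x / 2)) ^ 2 := by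
    have hc : Real.cos (2 * (x / 2)) = 2 * Real.cos (x / 2) ^ 2 - 1 := Real.cos_two_mul _
    have hp : Real.sin (x / 2) ^ 2 + Real.cos (x / 2) ^ 2 = 1 := Real.sin_sq_add_cos_sq _
    have hx : (2 : ℝ) * (x / 2) = x := by ring
    rw [hx] at hc
    have hs : Real.sin x ^ 2 + Real.cos x ^ 2 = 1 := Real.sin_sq_add_cos_sq _
    nlinarith
  rw [h1, h2, Real.sqrt_sq_eq_abs]
  calc |2 * Real.sin (x / 2)| = 2 * |Real.sin (x / 2)| := by
        rw [abs_mul, abs_two]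
    _ ≤ 2 * |x / 2| := by
        have := Real.abs_sin_le_abs (x := x / 2); linarith
    _ = |x| := by rw [abs_div, abs_two]; ring

/-- **Asymptotics of Green's character sum.**
Fix an integer `q ≥ 2` and for `n ≥ 1` let
`s n = Σ_{m=0}^{n−1} exp(2πi·qᵐ/(qⁿ − 1))`, i.e. `ζ + ζ^q + ⋯ + ζ^{q^{n−1}}` with
`ζ = exp(2πi/(qⁿ − 1))`.  Then the series `Σ_{j=1}^{∞} (1 − exp(2πi/qʲ))` converges, and
`s n − n → −Σ_{j=1}^{∞} (1 − exp(2πi/qʲ))` as `n → ∞`.  In particular `s n = n + O(1)`. -/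
theorem green_sum_asymptotics (q : ℕ) (hq : 2 ≤ q)
    (s : ℕ → ℂ)
    (hs : ∀ n : ℕ, s n = ∑ m ∈ Finset.range n,
      Complex.exp (2 * Real.pi * Complex.I * (q : ℂ) ^ m / ((q : ℂ) ^ n - 1))) :
    Summable (fun j : ℕ => 1 - Complex.exp (2 * Real.pi * Complex.I / (q : ℂ) ^ (j + 1))) ∧
      Tendsto (fun n : ℕ => s n - n) atTop
        (nhds (- ∑' j : ℕ,
          (1 - Complex.exp (2 * Real.pi * Complex.I / (q : ℂ) ^ (j + 1))))) ∧
      (fun n : ℕ => s n - n) =O[atTop] (fun _ : ℕ => (1 : ℝ)) := by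
  have hq1 : (1 : ℝ) < (q : ℝ) := by exact_mod_cast Nat.lt_of_lt_of_le one_lt_two hq
  have hq0 : (0 : ℝ) < (q : ℝ) := lt_trans one_pos hq1
  -- real arguments
  set a : ℕ → ℕ → ℝ := fun n j => 2 * Real.pi * (q : ℝ) ^ (n - 1 - j) / ((q : ℝ) ^ n - 1)
    with ha_def
  set L : ℕ → ℝ := fun j => 2 * Real.pi / (q : ℝ) ^ (j + 1) with hL_def
  set f : ℕ → ℕ → ℂ := fun n j =>
    if j < n then Complex.exp ((a n j : ℂ) * Complex.I) - 1 else 0 with hf_def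
  set g : ℕ → ℂ := fun j => Complex.exp ((L j : ℂ) * Complex.I) - 1 with hg_def
  set bound : ℕ → ℝ := fun j => 4 * Real.pi * ((q : ℝ)⁻¹) ^ (j + 1) with hbound_def
  have hpow_pos : ∀ n : ℕ, (0 : ℝ) < (q : ℝ) ^ n := fun n => pow_pos hq0 n
  have hqn : ∀ n : ℕ, 1 ≤ n → (2 : ℝ) ≤ (q : ℝ) ^ n := by
    intro n hn
    calc (2 : ℝ) ≤ (q : ℝ) := by exact_mod_cast hq
    _ ≤ (q : ℝ) ^ n := le_self_pow₀ (le_of_lt hq1) (by omega)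
  -- summability of the bound
  have hb_sum : Summable bound := by
    have h1 : Summable (fun j : ℕ => ((q : ℝ)⁻¹) ^ j) := by
      apply summable_geometric_of_lt_one (by positivity)
      rw [inv_lt_one_iff₀]; right; exact hq1
    have h2 : Summable (fun j : ℕ => ((q : ℝ)⁻¹) ^ (j + 1)) := by
      simpa [pow_succ'] using h1.mul_left ((q : ℝ)⁻¹)
    simpa [hbound_def, mul_assoc] using h2.mul_left (4 * Real.pi)
  -- uniform bound on f
  have hfb : ∀ n : ℕ, ∀ j : ℕ, ‖f n j‖ ≤ bound j := by
    intro n j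
    by_cases hjn : j < n
    · simp only [hf_def, if_pos hjn]
      refine (green_aux_norm_exp_sub_one (a n j)).trans ?_
      have h2n : (2 : ℝ) ≤ (q : ℝ) ^ n := hqn n (by omega)
      have hden : (0 : ℝ) < (q : ℝ) ^ n - 1 := by linarith
      have habs : |a n j| = a n j := abs_of_nonneg (by
        apply div_nonneg _ (le_of_lt hden)
        positivity)
      rw [habs]
      have hpow : (q : ℝ) ^ (n - 1 - j) * (q : ℝ) ^ (j + 1) = (q : ℝ) ^ n := by
        rw [← pow_add]; congr 1; omega
      have hqj : (0 : ℝ) < (q : ℝ) ^ (j + 1) := hpow_pos _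
      have hmain : a n j ≤ 4 * Real.pi / (q : ℝ) ^ (j + 1) := by
        rw [ha_def]
        rw [div_le_div_iff₀ hden hqj]
        nlinarith [Real.pi_pos, hpow_pos (n - 1 - j)]
      calc a n j ≤ 4 * Real.pi / (q : ℝ) ^ (j + 1) := hmain
        _ = bound j := by
            simp only [hbound_def, inv_pow, div_eq_mul_inv]
    · simp only [hf_def, if_neg hjn, norm_zero, hbound_def]
      positivity
  -- pointwise convergence
  have hptw : ∀ j : ℕ, Tendsto (fun n => f n j) atTop (nhds (g j)) := by
    intro j
    have haL : Tendsto (fun n => a n j) atTop (nhds (L j)) := by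
      have he : Tendsto (fun n : ℕ => 2 * Real.pi / ((q : ℝ) ^ (j + 1) * ((q : ℝ) ^ n - 1)))
          atTop (nhds 0) := by
        have h1 : Tendsto (fun n : ℕ => (q : ℝ) ^ n - 1) atTop atTop :=
          tendsto_atTop_add_const_right _ (-1) (tendsto_pow_atTop_atTop_of_one_lt hq1)
        have h2 : Tendsto (fun n : ℕ => (q : ℝ) ^ (j + 1) * ((q : ℝ) ^ n - 1)) atTop atTop :=
          Tendsto.const_mul_atTop (hpow_pos (j + 1)) h1
        simpa [div_eq_mul_inv] using h2.inv_tendsto_atTop.const_mul (2 * Real.pi)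
      have hcong : ∀ᶠ n : ℕ in atTop,
          L j + 2 * Real.pi / ((q : ℝ) ^ (j + 1) * ((q : ℝ) ^ n - 1)) = a n j := by
        filter_upwards [eventually_ge_atTop (j + 1)] with n hn
        have h2n : (2 : ℝ) ≤ (q : ℝ) ^ n := hqn n (by omega)
        have hden : ((q : ℝ) ^ n - 1) ≠ 0 := by intro h; nlinarith
        have hqj : ((q : ℝ) ^ (j + 1)) ≠ 0 := ne_of_gt (hpow_pos _)
        have hpow : (q : ℝ) ^ (n - 1 - j) * (q : ℝ) ^ (j + 1) = (q : ℝ) ^ n := by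
          rw [← pow_add]; congr 1; omega
        rw [hL_def, ha_def]
        field_simp
        linear_combination (-1 : ℝ) * hpow
      have := he.const_add (L j)
      rw [add_zero] at this
      exact this.congr' hcong
    have hc : Tendsto (fun n => Complex.exp ((a n j : ℂ) * Complex.I) - 1) atTop
        (nhds (Complex.exp ((L j : ℂ) * Complex.I) - 1)) := by
      have h1 : Tendsto (fun n => ((a n j : ℝ) : ℂ)) atTop (nhds ((L j : ℝ) : ℂ)) :=
        (Complex.continuous_ofReal.tendsto _).comp haL
      exact ((Complex.continuous_exp.tendsto _).comp (h1.mul_const Complex.I)).sub_const 1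
    refine hc.congr' ?_
    filter_upwards [eventually_gt_atTop j] with n hn
    simp only [hf_def, if_pos hn]
  -- identification of s n - n with the partial tsum
  have hkey : ∀ n : ℕ, s n - n = ∑' j, f n j := by
    intro n
    have hts : ∑' j, f n j = ∑ j ∈ Finset.range n, f n j := by
      apply tsum_eq_sum
      intro j hj
      rw [Finset.mem_range] at hj
      simp only [hf_def]
      rw [if_neg (by omega)]
    rw [hts, hs n, ← Finset.sum_range_reflect
      (fun m => Complex.exp (2 * Real.pi * Complex.I * (q : ℂ) ^ m / ((q : ℂ) ^ n - 1))) n]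
    have hterm : ∀ j ∈ Finset.range n,
        f n j = Complex.exp (2 * Real.pi * Complex.I * (q : ℂ) ^ (n - 1 - j)
          / ((q : ℂ) ^ n - 1)) - 1 := by
      intro j hj
      rw [Finset.mem_range] at hj
      simp only [hf_def, if_pos hj, ha_def]
      congr 2
      push_cast
      ring
    rw [Finset.sum_congr rfl hterm, Finset.sum_sub_distrib, Finset.sum_const,
      Finset.card_range, nsmul_eq_mul, mul_one]
  -- the summand matches g up to sign
  have hmatch : ∀ j : ℕ,
      1 - Complex.exp (2 * Real.pi * Complex.I / (q : ℂ) ^ (j + 1)) = -(g j) := by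
    intro j
    simp only [hg_def, hL_def, neg_sub]
    congr 2
    push_cast
    ring
  have hg_norm : ∀ j : ℕ, ‖g j‖ ≤ bound j := by
    intro j
    refine le_of_tendsto (tendsto_norm.comp (hptw j)) ?_
    filter_upwards [eventually_ge_atTop 0] with n _
    exact hfb n j
  have hsummable : Summable
      (fun j : ℕ => 1 - Complex.exp (2 * Real.pi * Complex.I / (q : ℂ) ^ (j + 1))) := by
    apply Summable.of_norm_bounded hb_sum
    intro j
    rw [hmatch j, norm_neg]
    exact hg_norm j
  have htendsto : Tendsto (fun n : ℕ => s n - n) atTop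
      (nhds (- ∑' j : ℕ,
        (1 - Complex.exp (2 * Real.pi * Complex.I / (q : ℂ) ^ (j + 1))))) := by
    have h1 : Tendsto (fun n : ℕ => ∑' j, f n j) atTop (nhds (∑' j, g j)) :=
      tendsto_tsum_of_dominated_convergence hb_sum hptw
        (Eventually.of_forall (fun n => hfb n))
    have h2 : (∑' j, g j) = - ∑' j : ℕ,
        (1 - Complex.exp (2 * Real.pi * Complex.I / (q : ℂ) ^ (j + 1))) := by
      rw [← tsum_neg]
      congr 1
      funext j
      rw [hmatch j, neg_neg]
    rw [← h2]
    exact h1.congr (fun n => (hkey n).symm)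
  exact ⟨hsummable, htendsto, htendsto.isBigO_one ℝ⟩
end

section
/- Let q be a prime power, let F be a finite field with q elements, let n ≥ 1, and let g ∈ GL_n(F) be a matrix whose characteristic polynomial is irreducible over F. Then the determinant map restricted to the centralizer of g in GL_n(F) is surjective onto F^×; that is, for every nonzero u ∈ F there exists h ∈ GL_n(F) with h·g = g·h and det h = u. -/
open Finset in
lemma finiteField_norm_surj (F K : Type*) [Field F] [Fintype F] [Field K] [Fintype K]
    [Algebra F K] : ∀ u : F, u ≠ 0 → ∃ x : K, x ≠ 0 ∧ Algebra.norm F x = u := by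
  classical
  set q := Fintype.card F with hq
  set n := Module.finrank F K with hn
  have hcardK : Fintype.card K = q ^ n := by
    simpa using Module.card_fintype (Module.finBasis F K)
  have hq2 : 2 ≤ q := Fintype.one_lt_card
  have hn0 : 0 < n := Module.finrank_pos
  -- characteristic
  obtain ⟨p, hp⟩ := CharP.exists F
  obtain ⟨k, hpprime, hqpk⟩ := FiniteField.card F p
  haveI : Fact p.Prime := ⟨hpprime⟩
  haveI : CharP K p := charP_of_injective_algebraMap' (A := K) F p
  -- Frobenius x ↦ x ^ q as an F-algebra equiv of K
  have hfrob : ∀ x : K, (iterateFrobenius K p k) x = x ^ q := by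
    intro x; rw [iterateFrobenius_def, ← hqpk]
  let φa : K →ₐ[F] K :=
    { toRingHom := iterateFrobenius K p k
      commutes' := by
        intro c
        show (iterateFrobenius K p k) _ = _
        rw [hfrob, ← map_pow, hq, FiniteField.pow_card] }
  have hφa : ∀ x : K, φa x = x ^ q := hfrob
  let φ : K ≃ₐ[F] K := AlgEquiv.ofBijective φa
    ((Finite.injective_iff_bijective).mp φa.injective)
  have hφ : ∀ x : K, φ x = x ^ q := hφa
  have hφpow : ∀ (i : ℕ) (x : K), (φ ^ i) x = x ^ q ^ i := by
    intro i
    induction i with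
    | zero => intro x; simp
    | succ i ih =>
      intro x
      rw [pow_succ, AlgEquiv.mul_apply, hφ, ih, ← pow_mul, pow_succ, mul_comm]
  -- order of φ is n
  have hφn : φ ^ n = 1 := by
    ext x
    rw [hφpow, AlgEquiv.one_apply, ← hcardK, FiniteField.pow_card]
  have horder : orderOf φ = n := by
    have hdvd : orderOf φ ∣ n := orderOf_dvd_of_pow_eq_one hφn
    rcases lt_or_eq_of_le (Nat.le_of_dvd hn0 hdvd) with hlt | heq
    · exfalso
      set d := orderOf φ with hd
      have hd0 : 0 < d := orderOf_pos φ
      have hall : ∀ x : K, x ^ q ^ d = x := by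
        intro x
        have := pow_orderOf_eq_one φ
        calc x ^ q ^ d = (φ ^ d) x := (hφpow d x).symm
        _ = x := by rw [this]; rfl
      -- every element of K is a root of X^(q^d) - X, too many roots
      set P : Polynomial K := Polynomial.X ^ (q ^ d) - Polynomial.X with hP
      have hqd1 : 1 < q ^ d := one_lt_pow₀ (by omega) (by omega)
      have hPdeg : P.natDegree = q ^ d := by
        rw [hP, Polynomial.natDegree_sub_eq_left_of_natDegree_lt] <;>
          simp [Polynomial.natDegree_X_pow, hqd1]
      have hPne : P ≠ 0 := by
        intro h0
        have := hPdeg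
        rw [h0] at this
        simp at this
        omega
      have hroots : ∀ x : K, x ∈ P.roots.toFinset := by
        intro x
        rw [Multiset.mem_toFinset, Polynomial.mem_roots hPne]
        simp [hP, Polynomial.IsRoot.def, hall x]
      have hcard : Fintype.card K ≤ P.roots.toFinset.card :=
        Finset.card_le_card_of_injOn id (fun x _ => hroots x) (Set.injOn_id _)
          |>.trans_eq (by simp [Finset.card_univ])
      have hcard2 : P.roots.toFinset.card ≤ q ^ d :=
        (Multiset.toFinset_card_le _).trans ((Polynomial.card_roots' P).trans_eq hPdeg)
      have : q ^ n ≤ q ^ d := hcardK ▸ (hcard.trans hcard2)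
      exact absurd this (by
        exact not_le.mpr (Nat.pow_lt_pow_right (by omega) hlt))
    · exact heq
  -- the norm is x ^ s where s = 1 + q + ... + q^(n-1)
  set s := ∑ i ∈ Finset.range n, q ^ i with hs
  have hnorm : ∀ x : K, algebraMap F K (Algebra.norm F x) = x ^ s := by
    intro x
    rw [Algebra.norm_eq_prod_automorphisms]
    have hcardG : Fintype.card (K ≃ₐ[F] K) = n := by
      rw [← Nat.card_eq_fintype_card]; exact IsGalois.card_aut_eq_finrank F K
    have hinj : Function.Injective (fun i : Fin n => φ ^ (i : ℕ)) := by
      intro i j hij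
      refine Fin.ext (pow_injOn_Iio_orderOf ?_ ?_ hij)
      · exact Set.mem_Iio.mpr (by rw [horder]; exact i.isLt)
      · exact Set.mem_Iio.mpr (by rw [horder]; exact j.isLt)
    have hbij : Function.Bijective (fun i : Fin n => φ ^ (i : ℕ)) :=
      (Fintype.bijective_iff_injective_and_card _).mpr ⟨hinj, by simp [hcardG]⟩
    let e : Fin n ≃ (K ≃ₐ[F] K) := Equiv.ofBijective _ hbij
    have h1 : ∏ σ : K ≃ₐ[F] K, σ x = ∏ i : Fin n, (φ ^ (i : ℕ)) x :=
      (Fintype.prod_equiv e (fun i => (φ ^ (i : ℕ)) x) (fun σ => σ x)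
        (fun i => rfl)).symm
    rw [h1]
    calc ∏ i : Fin n, (φ ^ (i : ℕ)) x = ∏ i : Fin n, x ^ q ^ (i : ℕ) := by
          refine Finset.prod_congr rfl fun i _ => hφpow _ _
    _ = ∏ i ∈ Finset.range n, x ^ q ^ i :=
          Fin.prod_univ_eq_prod_range (fun i => x ^ q ^ i) n
    _ = x ^ s := by rw [hs, Finset.prod_pow_eq_pow_sum]
  -- arithmetic : (q^n - 1) = s * (q - 1)
  have hsmul : s * (q - 1) = q ^ n - 1 := by
    have h1q : 1 ≤ q := by omega
    have h1qn : 1 ≤ q ^ n := Nat.one_le_pow _ _ (by omega)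
    zify [h1q, h1qn]
    rw [hs]
    push_cast
    exact geom_sum_mul (q : ℤ) n
  -- final argument via a generator of Kˣ
  intro u hu
  obtain ⟨ζ, hζ⟩ := IsCyclic.exists_generator (α := Kˣ)
  have hcardU : Fintype.card Kˣ = q ^ n - 1 := by rw [Fintype.card_units, hcardK]
  have horderζ : orderOf ζ = q ^ n - 1 := by
    rw [orderOf_eq_card_of_forall_mem_zpowers hζ, Nat.card_eq_fintype_card, hcardU]
  have halginj : Function.Injective (algebraMap F K) := (algebraMap F K).injective
  have hu0 : algebraMap F K u ≠ 0 := fun h => hu (halginj (by rw [h, map_zero]))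
  set w : Kˣ := Units.mk0 _ hu0 with hwdef
  obtain ⟨j, hj⟩ : ∃ j : ℕ, ζ ^ j = w := by
    have := hζ w
    rwa [← mem_powers_iff_mem_zpowers, Submonoid.mem_powers_iff] at this
  have hw : w ^ (q - 1) = 1 := by
    apply Units.ext
    show ((w : Kˣ) : K) ^ (q - 1) = 1
    show (algebraMap F K u) ^ (q - 1) = 1
    rw [← map_pow, FiniteField.pow_card_sub_one_eq_one u hu, map_one]
  have hdvd : orderOf ζ ∣ j * (q - 1) :=
    orderOf_dvd_of_pow_eq_one (by rw [pow_mul, hj, hw])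
  rw [horderζ, ← hsmul] at hdvd
  have hsdvd : s ∣ j := by
    rcases hdvd with ⟨c, hc⟩
    refine ⟨c, Nat.eq_of_mul_eq_mul_right (show 0 < q - 1 by omega) ?_⟩
    rw [hc]; ring
  obtain ⟨c, rfl⟩ := hsdvd
  refine ⟨((ζ ^ c : Kˣ) : K), Units.ne_zero _, ?_⟩
  apply halginj
  rw [hnorm]
  have : (ζ ^ c) ^ s = w := by rw [← pow_mul, mul_comm c s, hj]
  calc ((ζ ^ c : Kˣ) : K) ^ s = (((ζ ^ c) ^ s : Kˣ) : K) := by push_cast; ring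
  _ = ((w : Kˣ) : K) := by rw [this]
  _ = algebraMap F K u := rfl

/-- **Determinant is surjective on the centralizer of a regular element.**
Let `F` be a finite field with `q` elements (`q` a prime power), `n ≥ 1`, and let
`g ∈ GLₙ(F)` have irreducible characteristic polynomial.  Then for every nonzero `u ∈ F`
there exists `h ∈ GLₙ(F)` commuting with `g` with `det h = u`. -/
theorem det_surjective_on_centralizer (q n : ℕ) (hq : IsPrimePow q)
    (F : Type) [Field F] [Fintype F] (hF : Fintype.card F = q) (hn : 1 ≤ n)
    (g : Matrix.GeneralLinearGroup (Fin n) F)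
    (hirr : Irreducible (Matrix.charpoly (g : Matrix (Fin n) (Fin n) F))) :
    ∀ u : F, u ≠ 0 → ∃ h : Matrix.GeneralLinearGroup (Fin n) F,
      h * g = g * h ∧ Matrix.det (h : Matrix (Fin n) (Fin n) F) = u := by
  classical
  intro u hu
  haveI : Nontrivial F := inferInstance
  set M := (g : Matrix (Fin n) (Fin n) F) with hM
  set P := M.charpoly with hPdef
  haveI : Fact (Irreducible P) := ⟨hirr⟩
  have hPmonic : P.Monic := Matrix.charpoly_monic M
  have hP0 : P ≠ 0 := hPmonic.ne_zero
  have hPdeg : P.natDegree = n := by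
    rw [hPdef, Matrix.charpoly_natDegree_eq_dim, Fintype.card_fin]
  set K := AdjoinRoot P with hK
  let pb : PowerBasis F K := AdjoinRoot.powerBasis hP0
  haveI : FiniteDimensional F K := PowerBasis.finite pb
  have hfinrank : Module.finrank F K = n := by
    rw [PowerBasis.finrank pb, AdjoinRoot.powerBasis_dim, hPdeg]
  haveI : Finite K := Module.finite_of_finite F
  haveI : Fintype K := Fintype.ofFinite K
  -- the representation of K on F^n
  have hPM : (Polynomial.aeval M) P = 0 := Matrix.aeval_self_charpoly M
  let ψ : K →ₐ[F] Matrix (Fin n) (Fin n) F :=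
    Ideal.Quotient.liftₐ (Ideal.span {P}) (Polynomial.aeval M) (by
      intro a ha
      rw [Ideal.mem_span_singleton] at ha
      obtain ⟨b, rfl⟩ := ha
      rw [map_mul, hPM, zero_mul])
  have hψmk : ∀ f : Polynomial F, ψ (AdjoinRoot.mk P f) = Polynomial.aeval M f :=
    fun f => rfl
  have hcomm : ∀ x : K, ψ x * M = M * ψ x := by
    intro x
    obtain ⟨f, rfl⟩ := AdjoinRoot.mk_surjective x
    rw [hψmk]
    have h1 : (Polynomial.aeval M) (f * Polynomial.X) =
        (Polynomial.aeval M) (Polynomial.X * f) := by rw [mul_comm]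
    simpa [map_mul] using h1
  -- the linear equivalence K ≃ F^n
  let v₀ : Fin n → F := fun _ => 1
  have hv₀ : v₀ ≠ 0 := by
    intro h
    have := congrFun h ⟨0, hn⟩
    simp [v₀] at this
  let e₀ : K →ₗ[F] (Fin n → F) :=
    { toFun := fun y => (ψ y).mulVec v₀
      map_add' := by
        intro a b
        show (ψ (a + b)).mulVec v₀ = (ψ a).mulVec v₀ + (ψ b).mulVec v₀
        rw [map_add, Matrix.add_mulVec]
      map_smul' := by
        intro c a
        show (ψ (c • a)).mulVec v₀ = c • (ψ a).mulVec v₀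
        rw [map_smul, Matrix.smul_mulVec] }
  have he₀ : ∀ y : K, e₀ y = (ψ y).mulVec v₀ := fun _ => rfl
  have he₀inj : Function.Injective e₀ := by
    rw [← LinearMap.ker_eq_bot, LinearMap.ker_eq_bot']
    intro y hy
    by_contra hy0
    apply hv₀
    have h1 : (ψ (y⁻¹ * y)).mulVec v₀ = v₀ := by
      rw [inv_mul_cancel₀ hy0, map_one, Matrix.one_mulVec]
    rw [← h1, map_mul, ← Matrix.mulVec_mulVec]
    rw [he₀] at hy
    rw [hy, Matrix.mulVec_zero]
  let e : K ≃ₗ[F] (Fin n → F) := LinearMap.linearEquivOfInjective e₀ he₀inj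
    (by rw [hfinrank]; simp)
  have he : ∀ y : K, e y = (ψ y).mulVec v₀ := fun _ => rfl
  -- det ψ x = norm x
  have hdet : ∀ x : K, (ψ x).det = Algebra.norm F x := by
    intro x
    rw [← LinearMap.det_toLin' (ψ x), Algebra.norm_apply]
    have h3 : Matrix.toLin' (ψ x) =
        (e : K →ₗ[F] (Fin n → F)) ∘ₗ ((Algebra.lmul F K) x) ∘ₗ
          (e.symm : (Fin n → F) →ₗ[F] K) := by
      apply LinearMap.ext
      intro v
      have hv : v = e (e.symm v) := (e.apply_symm_apply v).symm
      simp only [LinearMap.comp_apply, LinearEquiv.coe_coe]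
      show Matrix.mulVec (ψ x) v = e (x * e.symm v)
      conv_lhs => rw [hv]
      rw [he, he, map_mul, ← Matrix.mulVec_mulVec]
    rw [h3, LinearMap.det_conj]
  -- conclude
  obtain ⟨x, hx0, hxnorm⟩ := finiteField_norm_surj F K u hu
  have hdetx : (ψ x).det = u := by rw [hdet, hxnorm]
  have hunit : IsUnit (ψ x) := (Matrix.isUnit_iff_isUnit_det _).mpr
    (by rw [hdetx]; exact hu.isUnit)
  obtain ⟨h, hh⟩ := hunit
  refine ⟨h, ?_, ?_⟩
  · apply Units.ext
    show (h : Matrix (Fin n) (Fin n) F) * M = M * h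
    rw [hh]
    exact hcomm x
  · rw [hh]; exact hdetx
end
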